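/- Let G be a finite connected simple graph with n ≥ 2 vertices and m edges. Then 4m ≥ n·(b(G) + 1), where b(G) is the bondage number of G. -/

import Mathlib

/-- A finset `D` of vertices is a dominating set of `G` if every vertex not in `D`
is adjacent to some vertex in `D`. -/
def SimpleGraph.IsDominatingSet {V : Type*} (G : SimpleGraph V) (D : Finset V) : Prop :=
  ∀ v : V, v ∉ D → ∃ u ∈ D, G.Adj u v

/-- The domination number of `G`: the minimum cardinality of a dominating set. -/
noncomputable def SimpleGraph.dominationNumber {V : Type*} [Fintype V]
    (G : SimpleGraph V) : ℕ :=
  sInf {k | ∃ D : Finset V, G.IsDominatingSet D ∧ D.card = k}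

/-- The bondage number of `G`: the minimum cardinality of a set `B` of edges of `G`
whose removal increases the domination number. -/
noncomputable def SimpleGraph.bondageNumber {V : Type*} [Fintype V]
    (G : SimpleGraph V) : ℕ :=
  sInf {k | ∃ B : Finset (Sym2 V), ↑B ⊆ G.edgeSet ∧ B.card = k ∧
    G.dominationNumber < (G.deleteEdges ↑B).dominationNumber}

/-
Hartnell and Rall: if `u ≠ v` are at distance at most two, with `w` a common neighbour (or
`w = u` when `u, v` are adjacent), then deleting every edge at `u` and every edge at `v` except
`vw` raises the domination number, since in the new graph `u` is isolated and `v` can only be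
dominated through `w`; hence `b(G) < deg u + deg v`.

It remains to find such a pair with `n (deg u + deg v) ≤ 4m`. Put `f x = n deg x - 2m`, so that
`∑ f = 0`. If `f u + f v > 0` for all pairs at distance at most two, the vertices with `f ≤ 0`
have pairwise disjoint closed neighbourhoods, each of positive `f`-mass, and every other vertex
has positive `f`, so `∑ f > 0`.
-/

open Finset

lemma Finset.card_insert_erase_le {α : Type*} [DecidableEq α] {s : Finset α} {a b : α}
    (h : a ∈ s ∨ b ∈ s) : #(insert b (s.erase a)) ≤ #s := by
  rcases h with ha | hb
  · exact (card_insert_le _ _).trans_eq (card_erase_add_one ha)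
  · exact card_le_card (insert_subset hb (erase_subset a s))

namespace SimpleGraph

variable {V : Type*} {G H : SimpleGraph V} {D : Finset V} {u v w : V}

namespace IsDominatingSet

lemma mono (hD : H.IsDominatingSet D) (hHG : H ≤ G) : G.IsDominatingSet D :=
  fun x hx => (hD x hx).imp fun _ ⟨hy, hyx⟩ => ⟨hy, hHG hyx⟩

lemma mem_of_isIsolated (hD : G.IsDominatingSet D) (hu : G.IsIsolated u) : u ∈ D := by
  by_contra h
  obtain ⟨y, -, hyu⟩ := hD u h
  exact hu y hyu.symm

variable [DecidableEq V]

lemma erase_of_isIsolated (hD : H.IsDominatingSet D) (hHG : H ≤ G) (hu : H.IsIsolated u)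
    (hw : w ∈ D) (hwu : G.Adj w u) : G.IsDominatingSet (D.erase u) := by
  intro x hx
  by_cases hxu : x = u
  · subst hxu
    exact ⟨w, mem_erase.2 ⟨hwu.ne, hw⟩, hwu⟩
  obtain ⟨y, hy, hyx⟩ := hD x fun hxD => hx (mem_erase.2 ⟨hxu, hxD⟩)
  have hyu : y ≠ u := by
    rintro rfl
    exact hu x hyx
  exact ⟨y, mem_erase.2 ⟨hyu, hy⟩, hHG hyx⟩

lemma insert_erase (hD : H.IsDominatingSet D) (hHG : H ≤ G) (hwv : G.Adj w v)
    (hv : ∀ y, H.Adj y v → y = w) : G.IsDominatingSet (insert w (D.erase v)) := by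
  intro x hx
  by_cases hxv : x = v
  · subst hxv
    exact ⟨w, mem_insert_self w _, hwv⟩
  obtain ⟨y, hy, hyx⟩ := hD x fun hxD => hx (mem_insert_of_mem (mem_erase.2 ⟨hxv, hxD⟩))
  have hyv : y ≠ v := by
    rintro rfl
    exact hx (hv x hyx.symm ▸ mem_insert_self x _)
  exact ⟨y, mem_insert_of_mem (mem_erase.2 ⟨hyv, hy⟩), hHG hyx⟩

end IsDominatingSet

lemma isIsolated_deleteEdges {s : Set (Sym2 V)} (h : G.incidenceSet u ⊆ s) :
    (G.deleteEdges s).IsIsolated u := fun y hy =>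
  (deleteEdges_adj.1 hy).2 (h ((G.mem_incidenceSet u y).2 (deleteEdges_adj.1 hy).1))

lemma eq_of_deleteEdges_adj {s : Set (Sym2 V)} (h : G.incidenceSet v \ {s(v, w)} ⊆ s)
    {y : V} (hy : (G.deleteEdges s).Adj y v) : y = w := by
  by_contra hyw
  refine (deleteEdges_adj.1 hy).2 (Sym2.eq_swap ▸ h ⟨?_, ?_⟩)
  · exact (G.mem_incidenceSet v y).2 (deleteEdges_adj.1 hy).1.symm
  · exact fun he => hyw (Sym2.congr_right.1 he)

variable [Fintype V]

lemma dominationNumber_le_card (hD : G.IsDominatingSet D) : G.dominationNumber ≤ #D :=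
  Nat.sInf_le ⟨D, hD, rfl⟩

lemma exists_isDominatingSet_card_eq_dominationNumber (G : SimpleGraph V) :
    ∃ D, G.IsDominatingSet D ∧ #D = G.dominationNumber :=
  Nat.sInf_mem (⟨_, univ, fun v hv => absurd (mem_univ v) hv, rfl⟩ :
    Set.Nonempty {k | ∃ D, G.IsDominatingSet D ∧ #D = k})

lemma dominationNumber_lt_of_forall_exists
    (h : ∀ D, H.IsDominatingSet D → ∃ D', G.IsDominatingSet D' ∧ #D' < #D) :
    G.dominationNumber < H.dominationNumber := by
  obtain ⟨D, hD, hcard⟩ := H.exists_isDominatingSet_card_eq_dominationNumber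
  obtain ⟨D', hD', hlt⟩ := h D hD
  exact hcard ▸ (dominationNumber_le_card hD').trans_lt hlt

lemma bondageNumber_le_card {B : Finset (Sym2 V)} (hB : ↑B ⊆ G.edgeSet)
    (hlt : G.dominationNumber < (G.deleteEdges ↑B).dominationNumber) :
    G.bondageNumber ≤ #B :=
  Nat.sInf_le ⟨B, hB, rfl, hlt⟩

variable [DecidableEq V]

lemma dominationNumber_lt_deleteEdges {s : Set (Sym2 V)} (huv : u ≠ v) (hvw : G.Adj v w)
    (huw : w = u ∨ G.Adj u w) (hsu : G.incidenceSet u ⊆ s)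
    (hsv : G.incidenceSet v \ {s(v, w)} ⊆ s) :
    G.dominationNumber < (G.deleteEdges s).dominationNumber := by
  have hu : (G.deleteEdges s).IsIsolated u := isIsolated_deleteEdges hsu
  have hv : ∀ y, (G.deleteEdges s).Adj y v → y = w := fun _ => eq_of_deleteEdges_adj hsv
  refine dominationNumber_lt_of_forall_exists fun D hD => ?_
  rcases huw with rfl | huw
  · have hv' : (G.deleteEdges s).IsIsolated v := fun y hy => hu v (hv y hy.symm ▸ hy.symm)
    exact ⟨D.erase v,
      hD.erase_of_isIsolated (deleteEdges_le _) hv' (hD.mem_of_isIsolated hu) hvw.symm,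
      card_erase_lt_of_mem (hD.mem_of_isIsolated hv')⟩
  set D₀ := insert w (D.erase v)
  have hD₀ : (G.deleteIncidenceSet u).IsDominatingSet D₀ :=
    hD.insert_erase (deleteEdges_anti hsu)
      (deleteIncidenceSet_adj.2 ⟨hvw.symm, huw.ne', huv.symm⟩) hv
  have hu₀ : (G.deleteIncidenceSet u).IsIsolated u := fun y hy =>
    (deleteIncidenceSet_adj.1 hy).2.1 rfl
  refine ⟨D₀.erase u, hD₀.erase_of_isIsolated (G.deleteIncidenceSet_le u) hu₀
    (mem_insert_self w _) huw.symm, ?_⟩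
  have hvw_mem : v ∈ D ∨ w ∈ D := or_iff_not_imp_left.2 fun hvD =>
    let ⟨y, hy, hyv⟩ := hD v hvD
    hv y hyv ▸ hy
  calc #(D₀.erase u) < #D₀ :=
        card_erase_lt_of_mem (mem_insert_of_mem (mem_erase.2 ⟨huv, hD.mem_of_isIsolated hu⟩))
    _ ≤ #D := card_insert_erase_le hvw_mem

variable [DecidableRel G.Adj]

lemma bondageNumber_lt_degree_add_degree (huv : u ≠ v)
    (hclose : G.Adj u v ∨ ∃ w, G.Adj u w ∧ G.Adj w v) :
    G.bondageNumber < G.degree u + G.degree v := by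
  obtain ⟨w, hvw, huw⟩ : ∃ w, G.Adj v w ∧ (w = u ∨ G.Adj u w) := by
    rcases hclose with h | ⟨w, huw, hwv⟩
    exacts [⟨u, h.symm, .inl rfl⟩, ⟨w, hwv.symm, .inr huw⟩]
  set B := G.incidenceFinset u ∪ (G.incidenceFinset v).erase s(v, w)
  have hB : ↑B ⊆ G.edgeSet := by
    intro e he
    rcases mem_union.1 he with h | h
    · exact G.incidenceSet_subset u ((G.mem_incidenceFinset _ e).1 h)
    · exact G.incidenceSet_subset v ((G.mem_incidenceFinset _ e).1 (mem_of_mem_erase h))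
  have hBu : G.incidenceSet u ⊆ ↑B := fun e he =>
    mem_union_left _ ((G.mem_incidenceFinset _ _).2 he)
  have hBv : G.incidenceSet v \ {s(v, w)} ⊆ ↑B := fun e ⟨he, hne⟩ =>
    mem_union_right _ (mem_erase.2 ⟨hne, (G.mem_incidenceFinset _ _).2 he⟩)
  have hcard : #B < G.degree u + G.degree v := by
    have hvw' : s(v, w) ∈ G.incidenceFinset v :=
      (G.mem_incidenceFinset _ _).2 ((G.mem_incidenceSet v w).2 hvw)
    calc #B ≤ #(G.incidenceFinset u) + #((G.incidenceFinset v).erase s(v, w)) :=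
          card_union_le _ _
      _ < G.degree u + G.degree v := by
        rw [card_incidenceFinset_eq_degree, ← card_incidenceFinset_eq_degree G v]
        exact Nat.add_lt_add_left (card_erase_lt_of_mem hvw') _
  exact (bondageNumber_le_card hB (dominationNumber_lt_deleteEdges huv hvw huw hBu hBv)).trans_lt
    hcard

section Discharging

variable {α : Type*} [AddCommGroup α] [LinearOrder α] [IsOrderedAddMonoid α] {f : V → α}

lemma sum_insert_neighborFinset_pos (hu : ¬ G.IsIsolated u) (hfu : f u ≤ 0)
    (hf : ∀ x, G.Adj u x → 0 < f u + f x) :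
    0 < ∑ x ∈ insert u (G.neighborFinset u), f x := by
  obtain ⟨x₀, hx₀⟩ := exists_adj_iff_not_isIsolated.2 hu
  have hpos : ∀ x ∈ G.neighborFinset u, 0 ≤ f x := fun x hx =>
    ((hf x ((G.mem_neighborFinset u x).1 hx)).trans_le (add_le_iff_nonpos_left.2 hfu)).le
  rw [sum_insert (G.notMem_neighborFinset_self u)]
  calc 0 < f u + f x₀ := hf x₀ hx₀
    _ ≤ f u + ∑ x ∈ G.neighborFinset u, f x := by
      gcongr
      exact single_le_sum hpos ((G.mem_neighborFinset u x₀).2 hx₀)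

lemma exists_add_nonpos_of_sum_nonpos [Nonempty V] (hG : ∀ v, ¬ G.IsIsolated v)
    (hf : ∑ v, f v ≤ 0) :
    ∃ u v, u ≠ v ∧ (G.Adj u v ∨ ∃ w, G.Adj u w ∧ G.Adj w v) ∧ f u + f v ≤ 0 := by
  by_contra! hclose
  refine hf.not_gt ?_
  set L := univ.filter fun u => f u ≤ 0
  have hL : ∀ x, x ∉ L → 0 < f x := fun x hx =>
    not_le.1 fun h => hx (mem_filter.2 ⟨mem_univ x, h⟩)
  rcases L.eq_empty_or_nonempty with hL₀ | hL₀
  · exact sum_pos (fun x _ => hL x (hL₀ ▸ notMem_empty x)) univ_nonempty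
  have hdisj : (L : Set V).PairwiseDisjoint fun u => insert u (G.neighborFinset u) := by
    intro u hu v hv huv
    refine Finset.disjoint_left.2 fun x hxu hxv =>
      (add_nonpos (mem_filter.1 hu).2 (mem_filter.1 hv).2).not_gt (hclose u v huv ?_)
    simp only [mem_insert, mem_neighborFinset] at hxu hxv
    rcases hxu with rfl | hux <;> rcases hxv with rfl | hvx
    · exact absurd rfl huv
    · exact .inl hvx.symm
    · exact .inl hux
    · exact .inr ⟨x, hux, hvx.symm⟩
  rw [← sum_add_sum_compl (L.biUnion fun u => insert u (G.neighborFinset u)), sum_biUnion hdisj]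
  refine add_pos_of_pos_of_nonneg (sum_pos (fun u hu => ?_) hL₀) (sum_nonneg fun x hx => ?_)
  · exact sum_insert_neighborFinset_pos (hG u) (mem_filter.1 hu).2 fun x hx =>
      hclose u x hx.ne (.inl hx)
  · exact (hL x fun hxL => mem_compl.1 hx (mem_biUnion.2 ⟨x, hxL, mem_insert_self x _⟩)).le

end Discharging

lemma exists_close_pair_card_mul_degree_add_degree_le [Nonempty V]
    (hG : ∀ v, ¬ G.IsIsolated v) :
    ∃ u v, u ≠ v ∧ (G.Adj u v ∨ ∃ w, G.Adj u w ∧ G.Adj w v) ∧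
      Fintype.card V * (G.degree u + G.degree v) ≤ 4 * #G.edgeFinset := by
  set f : V → ℤ := fun x => Fintype.card V * G.degree x - 2 * #G.edgeFinset
  have hf : ∑ x, f x = 0 := by
    simp only [f, sum_sub_distrib, ← mul_sum, ← Nat.cast_sum, sum_degrees_eq_twice_card_edges,
      sum_const, card_univ, nsmul_eq_mul]
    push_cast
    ring
  obtain ⟨u, v, huv, hclose, hle⟩ := exists_add_nonpos_of_sum_nonpos hG hf.le
  refine ⟨u, v, huv, hclose, ?_⟩
  zify
  linarith

end SimpleGraph

theorem stmt_2 {V : Type*} [Fintype V] [DecidableEq V] (G : SimpleGraph V)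
    [DecidableRel G.Adj] (hconn : G.Connected) (hn : 2 ≤ Fintype.card V) :
    Fintype.card V * (G.bondageNumber + 1) ≤ 4 * G.edgeFinset.card := by
  have : Nontrivial V := Fintype.one_lt_card_iff_nontrivial.1 hn
  obtain ⟨u, v, huv, hclose, hle⟩ :=
    G.exists_close_pair_card_mul_degree_add_degree_le hconn.preconnected.not_isIsolated
  calc Fintype.card V * (G.bondageNumber + 1)
      ≤ Fintype.card V * (G.degree u + G.degree v) :=
        Nat.mul_le_mul_left _ (G.bondageNumber_lt_degree_add_degree huv hclose)
    _ ≤ 4 * G.edgeFinset.card := hle
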